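/- Let X₁, X₂, … be IID random variables on a standard discrete poset (S, ⪯) with common PDF f having support S, rate function r, and UPF F, and let Y₁, Y₂, … be the associated ladder variables. Then for every n ≥ 1 and every chain y₁ ⪯ y₂ ⪯ ⋯ ⪯ y_n in S, P(Y₁ = y₁, Y₂ = y₂, …, Y_n = y_n) = r(y₁) r(y₂) ⋯ r(y_{n−1}) f(y_n), and this probability is 0 when (y₁, …, y_n) is not an increasing chain. -/

import Mathlib

open scoped ENNReal NNReal
open MeasureTheory ProbabilityTheory

/-- The upper probability function (UPF) of a density `f` on a discrete poset:
`F x = ∑_{t ⪰ x} f t`, computed in `[0,∞]`. -/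
noncomputable def upf {S : Type*} [PartialOrder S] (f : S → ℝ≥0) (x : S) : ℝ≥0∞ :=
  ∑' t : {t : S // x ≤ t}, (f t : ℝ≥0∞)

/-- The ladder times of a sequence `X₀, X₁, X₂, …`: `N₀ = 0` and
`N_{n+1} = min {m > N_n : X_m ⪰ X_{N_n}}` (here indexed from `0`, so `ladderTime X n`
is the `(n+1)`-st ladder time of the paper). -/
noncomputable def ladderTime {Ω S : Type*} [PartialOrder S] (X : ℕ → Ω → S) :
    ℕ → Ω → ℕ
  | 0 => fun _ => 0
  | (n + 1) => fun ω =>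
      sInf {m : ℕ | ladderTime X n ω < m ∧ X (ladderTime X n ω) ω ≤ X m ω}

/-- The ladder variables: `Y_n = X_{N_n}` (indexed from `0`, so `ladderVar X n` is the
`(n+1)`-st ladder variable of the paper). -/
noncomputable def ladderVar {Ω S : Type*} [PartialOrder S] (X : ℕ → Ω → S)
    (n : ℕ) (ω : Ω) : S :=
  X (ladderTime X n ω) ω

/-!
Between two consecutive ladder epochs the sequence makes some number `j k` of steps that do not
dominate the current ladder value `y k`. For a fixed vector of gaps `j`, the event that the
ladder values are `y 0, …, y K` with these gaps is a cylinder in independent coordinates, of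
probability `f (y 0) * ∏ₖ (1 - F (y k)) ^ j k * f (y (k + 1))`. These cylinders are disjoint, and
summing the geometric series in each gap gives `f (y 0) * ∏ₖ f (y (k + 1)) / F (y k)`. The ladder
can only get stuck on the event that from some time on no `X m` dominates a fixed `z`; it has
probability at most `(1 - F z) ^ L` for every `L`, hence zero because `F z ≥ f z > 0`.
-/

theorem ENNReal.tsum_fin_pi_prod {β : Type*} :
    ∀ {K : ℕ} (g : Fin K → β → ℝ≥0∞), ∑' j : Fin K → β, ∏ k, g k (j k) = ∏ k, ∑' b, g k b
  | 0, g => by simp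
  | K + 1, g => by
    rw [← (Fin.consEquiv fun _ => β).tsum_eq, ENNReal.tsum_prod', Fin.prod_univ_succ]
    simp only [Fin.consEquiv, Equiv.coe_fn_mk, Fin.prod_univ_succ, Fin.cons_zero, Fin.cons_succ]
    simp_rw [ENNReal.tsum_mul_left, ENNReal.tsum_mul_right]
    rw [ENNReal.tsum_fin_pi_prod]

namespace Finset

variable {M : Type*} [CommMonoid M]

theorem prod_Ioc_eq_prod_range_prod_Ioc (q : ℕ → M) {τ : ℕ → ℕ} (hτ : Monotone τ) (n : ℕ) :
    ∏ i ∈ Ioc (τ 0) (τ n), q i = ∏ k ∈ range n, ∏ i ∈ Ioc (τ k) (τ (k + 1)), q i := by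
  induction n with
  | zero => simp
  | succ n ih =>
    rw [prod_range_succ, ← ih, prod_Ioc_consecutive _ (hτ n.zero_le) (hτ n.le_succ)]

theorem mul_prod_range_shift (a b : ℕ → M) (n : ℕ) :
    a 0 * ∏ k ∈ range n, (b k * a (k + 1)) = (∏ k ∈ range n, (a k * b k)) * a n := by
  induction n with
  | zero => simp
  | succ n ih =>
    rw [prod_range_succ, ← mul_assoc, ih, prod_range_succ]
    ac_rfl

end Finset

section Upf

variable {S : Type*} [PartialOrder S] {f : S → ℝ≥0}

theorem coe_le_upf (f : S → ℝ≥0) (x : S) : (f x : ℝ≥0∞) ≤ upf f x :=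
  ENNReal.le_tsum (⟨x, le_rfl⟩ : {t : S // x ≤ t})

theorem upf_ne_zero {x : S} (hx : 0 < f x) : upf f x ≠ 0 :=
  ((ENNReal.coe_pos.2 hx).trans_le (coe_le_upf f x)).ne'

theorem upf_le_tsum (f : S → ℝ≥0) (x : S) : upf f x ≤ ∑' t, (f t : ℝ≥0∞) :=
  ENNReal.tsum_comp_le_tsum_of_injective Subtype.val_injective _

end Upf

section GapTimes

variable {K : ℕ} (j : Fin K → ℕ)

/-- The ladder epochs `0 = τ 0 < ⋯ < τ K` when `j k` non-ladder steps separate `τ k` from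
`τ (k + 1)`. -/
def gapTime : ℕ → ℕ
  | 0 => 0
  | k + 1 => gapTime k + (if h : k < K then j ⟨k, h⟩ else 0) + 1

theorem gapTime_succ_of_lt {k : ℕ} (hk : k < K) :
    gapTime j (k + 1) = gapTime j k + j ⟨k, hk⟩ + 1 := by
  simp [gapTime, hk]

theorem gapTime_lt_succ (k : ℕ) : gapTime j k < gapTime j (k + 1) := by
  simp only [gapTime]; omega

theorem gapTime_strictMono : StrictMono (gapTime j) :=
  strictMono_nat_of_lt_succ (gapTime_lt_succ j)

theorem gapTime_injective {j j' : Fin K → ℕ} (h : ∀ k ≤ K, gapTime j k = gapTime j' k) :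
    j = j' := by
  funext k
  have hsucc := h (k + 1) k.isLt
  rw [gapTime_succ_of_lt j k.isLt, gapTime_succ_of_lt j' k.isLt, h k k.isLt.le] at hsucc
  simpa using hsucc

def gapBlock (i : ℕ) : ℕ :=
  Nat.findGreatest (fun k => gapTime j k ≤ i) i

theorem gapTime_gapBlock_le (i : ℕ) : gapTime j (gapBlock j i) ≤ i :=
  Nat.findGreatest_spec (P := fun k => gapTime j k ≤ i) i.zero_le i.zero_le

theorem lt_gapTime_gapBlock_succ (i : ℕ) : i < gapTime j (gapBlock j i + 1) := by
  by_contra! h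
  exact Nat.findGreatest_is_greatest (Nat.lt_succ_self _)
    (((gapTime_strictMono j).id_le _).trans h) h

theorem gapBlock_eq {k i : ℕ} (h₁ : gapTime j k ≤ i) (h₂ : i < gapTime j (k + 1)) :
    gapBlock j i = k := by
  have := (gapTime_strictMono j).lt_iff_lt.1 ((gapTime_gapBlock_le j i).trans_lt h₂)
  have := (gapTime_strictMono j).lt_iff_lt.1 (h₁.trans_lt (lt_gapTime_gapBlock_succ j i))
  omega

theorem gapBlock_gapTime (k : ℕ) : gapBlock j (gapTime j k) = k :=
  gapBlock_eq j le_rfl (gapTime_lt_succ j k)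

variable {S Ω : Type*} [PartialOrder S]

def gapConstraint (y : ℕ → S) (i : ℕ) : Set S :=
  if gapTime j (gapBlock j i) = i then {y (gapBlock j i)} else (Set.Ici (y (gapBlock j i)))ᶜ

theorem gapConstraint_gapTime (y : ℕ → S) (k : ℕ) : gapConstraint j y (gapTime j k) = {y k} := by
  simp [gapConstraint, gapBlock_gapTime]

theorem gapConstraint_of_lt_of_lt (y : ℕ → S) {k i : ℕ} (h₁ : gapTime j k < i)
    (h₂ : i < gapTime j (k + 1)) : gapConstraint j y i = (Set.Ici (y k))ᶜ := by
  simp [gapConstraint, gapBlock_eq j h₁.le h₂, h₁.ne]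

def gapEvent (X : ℕ → Ω → S) (y : ℕ → S) : Set Ω :=
  ⋂ i ∈ Finset.range (gapTime j K + 1), X i ⁻¹' gapConstraint j y i

theorem mem_gapEvent_iff {X : ℕ → Ω → S} {y : ℕ → S} {ω : Ω} :
    ω ∈ gapEvent j X y ↔ (∀ k ≤ K, X (gapTime j k) ω = y k) ∧
      ∀ k < K, ∀ i, gapTime j k < i → i < gapTime j (k + 1) → ¬ y k ≤ X i ω := by
  simp only [gapEvent, Set.mem_iInter, Finset.mem_range, Nat.lt_succ_iff, Set.mem_preimage]
  constructor
  · intro h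
    refine ⟨fun k hk => ?_, fun k hk i h₁ h₂ => ?_⟩
    · simpa [gapConstraint_gapTime] using h _ ((gapTime_strictMono j).monotone hk)
    · have hi := h i (h₂.le.trans ((gapTime_strictMono j).monotone hk))
      simpa [gapConstraint_of_lt_of_lt j y h₁ h₂] using hi
  · rintro ⟨hval, hgap⟩ i hi
    have hle := gapTime_gapBlock_le j i
    have hlt := lt_gapTime_gapBlock_succ j i
    have hK : gapBlock j i ≤ K := (gapTime_strictMono j).le_iff_le.1 (hle.trans hi)
    rcases hle.eq_or_lt with heq | hlt'
    · rw [← heq, gapConstraint_gapTime]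
      exact hval _ hK
    · have hK' : gapBlock j i < K := hK.lt_of_ne fun h => by rw [h] at hlt'; omega
      rw [gapConstraint_of_lt_of_lt j y hlt' hlt]
      exact hgap _ hK' i hlt' hlt

end GapTimes

section Ladder

variable {S Ω : Type*} [PartialOrder S] (X : ℕ → Ω → S) (ω : Ω)

theorem ladderTime_succ_eq {k m : ℕ} (hlt : ladderTime X k ω < m) (hle : ladderVar X k ω ≤ X m ω)
    (hmin : ∀ i, ladderTime X k ω < i → i < m → ¬ ladderVar X k ω ≤ X i ω) :
    ladderTime X (k + 1) ω = m :=
  le_antisymm (Nat.sInf_le ⟨hlt, hle⟩)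
    (le_csInf ⟨m, hlt, hle⟩ fun i hi => not_lt.1 fun h => hmin i hi.1 h hi.2)

theorem ladderTime_lt_ladderTime_succ {k : ℕ}
    (h : ∃ m, ladderTime X k ω < m ∧ ladderVar X k ω ≤ X m ω) :
    ladderTime X k ω < ladderTime X (k + 1) ω :=
  (Nat.sInf_mem h).1

theorem ladderVar_le_ladderVar_succ {k : ℕ}
    (h : ∃ m, ladderTime X k ω < m ∧ ladderVar X k ω ≤ X m ω) :
    ladderVar X k ω ≤ ladderVar X (k + 1) ω :=
  (Nat.sInf_mem h).2

theorem not_le_of_lt_ladderTime_succ {k i : ℕ} (h₁ : ladderTime X k ω < i)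
    (h₂ : i < ladderTime X (k + 1) ω) : ¬ ladderVar X k ω ≤ X i ω :=
  fun hle => Nat.notMem_of_lt_sInf h₂ ⟨h₁, hle⟩

/-- The event on which a ladder epoch at time `m` with value `z` is the last genuine one (the next
ladder time is then the junk value `sInf ∅ = 0`). -/
def neverAbove (z : S) (m : ℕ) : Set Ω :=
  {ω | ∀ i, m < i → ¬ z ≤ X i ω}

noncomputable def ladderGaps (K : ℕ) (ω : Ω) : Fin K → ℕ :=
  fun k => ladderTime X (k + 1) ω - ladderTime X k ω - 1

variable {X ω} {K : ℕ} {y : ℕ → S}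

theorem gapTime_ladderGaps (hinc : ∀ k < K, ladderTime X k ω < ladderTime X (k + 1) ω) :
    ∀ k ≤ K, gapTime (ladderGaps X K ω) k = ladderTime X k ω
  | 0, _ => rfl
  | k + 1, hk => by
    rw [gapTime_succ_of_lt _ hk, gapTime_ladderGaps hinc k (by omega)]
    have := hinc k hk
    simp only [ladderGaps]
    omega

theorem mem_gapEvent_ladderGaps (hω : ∀ i < K + 1, ladderVar X i ω = y i)
    (hinc : ∀ k < K, ladderTime X k ω < ladderTime X (k + 1) ω) :
    ω ∈ gapEvent (ladderGaps X K ω) X y := by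
  have hτ := gapTime_ladderGaps hinc
  refine (mem_gapEvent_iff _).2 ⟨fun k hk => ?_, fun k hk i h₁ h₂ => ?_⟩
  · rw [hτ k hk]
    exact hω k (by omega)
  · rw [hτ k hk.le] at h₁
    rw [hτ (k + 1) hk] at h₂
    rw [← hω k (by omega)]
    exact not_le_of_lt_ladderTime_succ X ω h₁ h₂

theorem ladderTime_eq_gapTime (j : Fin K → ℕ) (hy : ∀ k < K, y k ≤ y (k + 1))
    (hω : ω ∈ gapEvent j X y) : ∀ k ≤ K, ladderTime X k ω = gapTime j k
  | 0, _ => rfl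
  | k + 1, hk => by
    obtain ⟨hval, hgap⟩ := (mem_gapEvent_iff j).1 hω
    have ih := ladderTime_eq_gapTime j hy hω k (by omega)
    apply ladderTime_succ_eq X ω
    · rw [ih]
      exact gapTime_lt_succ j k
    · rw [ladderVar, ih, hval k (by omega), hval (k + 1) hk]
      exact hy k hk
    · rw [ladderVar, ih, hval k (by omega)]
      exact hgap k hk

theorem gapEvent_subset_ladder (j : Fin K → ℕ) (hy : ∀ k < K, y k ≤ y (k + 1)) :
    gapEvent j X y ⊆ {ω | ∀ i < K + 1, ladderVar X i ω = y i} := by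
  intro ω hω i hi
  rw [ladderVar, ladderTime_eq_gapTime j hy hω i (by omega)]
  exact ((mem_gapEvent_iff j).1 hω).1 i (by omega)

theorem pairwise_disjoint_gapEvent (hy : ∀ k < K, y k ≤ y (k + 1)) :
    Pairwise (Function.onFun Disjoint fun j : Fin K → ℕ => gapEvent j X y) := by
  intro j j' hne
  refine Set.disjoint_left.2 fun ω hω hω' => hne (gapTime_injective fun k hk => ?_)
  rw [← ladderTime_eq_gapTime j hy hω k hk, ladderTime_eq_gapTime j' hy hω' k hk]

theorem ladder_subset_union_gapEvent_union_neverAbove :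
    {ω | ∀ i < K + 1, ladderVar X i ω = y i} ⊆
      (⋃ j : Fin K → ℕ, gapEvent j X y) ∪ ⋃ k, ⋃ m, neverAbove X (y k) m := by
  intro ω hω
  by_cases hstuck : ∃ k < K, ¬ ∃ m, ladderTime X k ω < m ∧ ladderVar X k ω ≤ X m ω
  · obtain ⟨k, hk, hk'⟩ := hstuck
    refine Or.inr (Set.mem_iUnion₂.2 ⟨k, ladderTime X k ω, ?_⟩)
    rw [← hω k (by omega)]
    simpa [neverAbove] using hk'
  · push Not at hstuck
    exact Or.inl (Set.mem_iUnion.2 ⟨_, mem_gapEvent_ladderGaps hω fun k hk =>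
      ladderTime_lt_ladderTime_succ X ω (hstuck k hk)⟩)

end Ladder

section Measure

variable {S Ω : Type*} [Countable S] [MeasurableSpace S] [MeasurableSingletonClass S]
  [MeasurableSpace Ω] {P : Measure Ω} {f : S → ℝ≥0} {X : ℕ → Ω → S}

theorem measure_preimage_eq_tsum (hmeas : ∀ i, Measurable (X i))
    (hdist : ∀ i (x : S), P (X i ⁻¹' {x}) = (f x : ℝ≥0∞)) (i : ℕ) (B : Set S) :
    P (X i ⁻¹' B) = ∑' b : B, (f b : ℝ≥0∞) := by
  rw [← tsum_measure_preimage_singleton B.to_countable fun b _ =>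
    hmeas i (measurableSet_singleton b)]
  simp only [hdist]

variable [PartialOrder S] [IsProbabilityMeasure P]

theorem measure_preimage_compl_Ici (hmeas : ∀ i, Measurable (X i))
    (hdist : ∀ i (x : S), P (X i ⁻¹' {x}) = (f x : ℝ≥0∞)) (i : ℕ) (x : S) :
    P (X i ⁻¹' (Set.Ici x)ᶜ) = 1 - upf f x := by
  rw [Set.preimage_compl, prob_compl_eq_one_sub (hmeas i .of_discrete),
    measure_preimage_eq_tsum hmeas hdist]
  rfl

theorem measure_neverAbove (hmeas : ∀ i, Measurable (X i)) (hindep : iIndepFun X P)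
    (hdist : ∀ i (x : S), P (X i ⁻¹' {x}) = (f x : ℝ≥0∞)) {z : S} (hz : 0 < f z) (m : ℕ) :
    P (neverAbove X z m) = 0 := by
  have hlt : 1 - upf f z < 1 :=
    ENNReal.sub_lt_self ENNReal.one_ne_top one_ne_zero (upf_ne_zero hz)
  refine le_antisymm (ge_of_tendsto' (ENNReal.tendsto_pow_atTop_nhds_zero_of_lt_one hlt)
    fun L => ?_) zero_le
  calc P (neverAbove X z m) ≤ P (⋂ i ∈ Finset.Ioc m (m + L), X i ⁻¹' (Set.Ici z)ᶜ) :=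
        measure_mono fun ω hω => Set.mem_iInter₂.2 fun i hi => hω i (Finset.mem_Ioc.1 hi).1
    _ = (1 - upf f z) ^ L := by
        rw [hindep.meas_biInter fun i _ => ⟨_, .of_discrete, rfl⟩,
          Finset.prod_congr rfl fun i _ => measure_preimage_compl_Ici hmeas hdist i z]
        simp

theorem measure_gapEvent (hmeas : ∀ i, Measurable (X i)) (hindep : iIndepFun X P)
    (hdist : ∀ i (x : S), P (X i ⁻¹' {x}) = (f x : ℝ≥0∞)) (y : ℕ → S) {K : ℕ}
    (j : Fin K → ℕ) :
    P (gapEvent j X y) = f (y 0) * ∏ k : Fin K, ((1 - upf f (y k)) ^ j k * f (y (k + 1))) := by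
  set q : ℕ → ℝ≥0∞ := fun i => P (X i ⁻¹' gapConstraint j y i)
  have hq_epoch (k : ℕ) : q (gapTime j k) = f (y k) := by
    simp only [q, gapConstraint_gapTime, hdist]
  have hq_gap (k : ℕ) {i : ℕ} (h₁ : gapTime j k < i) (h₂ : i < gapTime j (k + 1)) :
      q i = 1 - upf f (y k) := by
    simp only [q, gapConstraint_of_lt_of_lt j y h₁ h₂, measure_preimage_compl_Ici hmeas hdist]
  have hblock (k : Fin K) : ∏ i ∈ Finset.Ioc (gapTime j k) (gapTime j (k + 1)), q i
      = (1 - upf f (y k)) ^ j k * f (y (k + 1)) := by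
    have hsucc := gapTime_succ_of_lt j k.isLt
    have hgap : ∀ i ∈ Finset.Ioc (gapTime j k) (gapTime j k + j k), q i = 1 - upf f (y k) :=
      fun i hi => hq_gap k (Finset.mem_Ioc.1 hi).1 (by rw [hsucc]; linarith [Finset.mem_Ioc.1 hi])
    rw [hsucc, Finset.prod_Ioc_succ_top (Nat.le_add_right _ _), ← hsucc, hq_epoch,
      Finset.prod_congr rfl hgap, Finset.prod_const, Nat.card_Ioc, Nat.add_sub_cancel_left]
  have hsplit : ∏ i ∈ Finset.Ioc 0 (gapTime j K), q i
      = ∏ k : Fin K, ∏ i ∈ Finset.Ioc (gapTime j k) (gapTime j (k + 1)), q i :=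
    (Finset.prod_Ioc_eq_prod_range_prod_Ioc q (gapTime_strictMono j).monotone K).trans
      (Fin.prod_univ_eq_prod_range
        (fun k => ∏ i ∈ Finset.Ioc (gapTime j k) (gapTime j (k + 1)), q i) K).symm
  rw [gapEvent, hindep.meas_biInter fun i _ => ⟨_, .of_discrete, rfl⟩, Finset.range_eq_Ico,
    Finset.prod_eq_prod_Ico_succ_bot (Nat.succ_pos _), Nat.succ_eq_add_one,
    Finset.Ico_add_one_add_one_eq_Ioc]
  rw [hsplit, Finset.prod_congr rfl fun k _ => hblock k]
  exact congrArg (· * _) (hq_epoch 0)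

theorem tsum_measure_gapEvent (hmeas : ∀ i, Measurable (X i)) (hindep : iIndepFun X P)
    (hdist : ∀ i (x : S), P (X i ⁻¹' {x}) = (f x : ℝ≥0∞))
    (hpdf : ∑' x : S, (f x : ℝ≥0∞) = 1) (y : ℕ → S) (K : ℕ) :
    ∑' j : Fin K → ℕ, P (gapEvent j X y)
      = f (y 0) * ∏ k : Fin K, ((upf f (y k))⁻¹ * f (y (k + 1))) := by
  have hgeom (x : S) : ∑' m : ℕ, (1 - upf f x) ^ m = (upf f x)⁻¹ := by
    rw [ENNReal.tsum_geometric,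
      ENNReal.sub_sub_cancel ENNReal.one_ne_top (hpdf ▸ upf_le_tsum f x)]
  simp_rw [measure_gapEvent hmeas hindep hdist, ENNReal.tsum_mul_left,
    ENNReal.tsum_fin_pi_prod fun (k : Fin K) (m : ℕ) => (1 - upf f (y k)) ^ m * f (y (k + 1)),
    ENNReal.tsum_mul_right, hgeom]

theorem measure_ladder_eq_tsum_measure_gapEvent (hmeas : ∀ i, Measurable (X i))
    (hindep : iIndepFun X P) (hdist : ∀ i (x : S), P (X i ⁻¹' {x}) = (f x : ℝ≥0∞))
    (hsupp : ∀ x : S, 0 < f x) {K : ℕ} {y : ℕ → S} (hy : ∀ k < K, y k ≤ y (k + 1)) :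
    P {ω | ∀ i < K + 1, ladderVar X i ω = y i} = ∑' j : Fin K → ℕ, P (gapEvent j X y) := by
  have hnull : P (⋃ k, ⋃ m, neverAbove X (y k) m) = 0 :=
    measure_iUnion_null fun k => measure_iUnion_null fun m =>
      measure_neverAbove hmeas hindep hdist (hsupp (y k)) m
  have hmeasE (j : Fin K → ℕ) : MeasurableSet (gapEvent j X y) :=
    Finset.measurableSet_biInter _ fun i _ => hmeas i .of_discrete
  rw [← measure_iUnion (pairwise_disjoint_gapEvent hy) hmeasE]
  refine le_antisymm ?_ (measure_mono (Set.iUnion_subset fun j => gapEvent_subset_ladder j hy))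
  calc _ ≤ P ((⋃ j, gapEvent j X y) ∪ ⋃ k, ⋃ m, neverAbove X (y k) m) :=
        measure_mono ladder_subset_union_gapEvent_union_neverAbove
    _ ≤ _ := (measure_union_le _ _).trans_eq (by rw [hnull, add_zero])

theorem measure_ladder_eq_zero_of_not_le (hmeas : ∀ i, Measurable (X i))
    (hindep : iIndepFun X P) (hdist : ∀ i (x : S), P (X i ⁻¹' {x}) = (f x : ℝ≥0∞))
    (hsupp : ∀ x : S, 0 < f x) {n i : ℕ} {y : ℕ → S} (hi : i + 1 < n)
    (hyi : ¬ y i ≤ y (i + 1)) :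
    P {ω | ∀ i < n, ladderVar X i ω = y i} = 0 := by
  refine measure_mono_null (fun ω hω => Set.mem_iUnion.2 ⟨ladderTime X i ω, ?_⟩)
    (measure_iUnion_null fun m => measure_neverAbove hmeas hindep hdist (hsupp (y i)) m)
  have hYi : ladderVar X i ω = y i := hω i (by omega)
  by_contra hnot
  refine hyi ?_
  rw [← hYi, ← hω (i + 1) hi]
  exact ladderVar_le_ladderVar_succ X ω (by simpa [neverAbove, ← hYi] using hnot)

end Measure

theorem ladderVar_joint_pdf_general
    {S : Type*} [Countable S] [PartialOrder S] [MeasurableSpace S]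
    [MeasurableSingletonClass S]
    {Ω : Type*} [MeasurableSpace Ω] (P : Measure Ω) [IsProbabilityMeasure P]
    (f : S → ℝ≥0)
    (hsupp : ∀ x : S, 0 < f x)
    (hpdf : ∑' x : S, (f x : ℝ≥0∞) = 1)
    (X : ℕ → Ω → S)
    (hmeas : ∀ i, Measurable (X i))
    (hindep : iIndepFun X P)
    (hdist : ∀ i (x : S), P (X i ⁻¹' {x}) = (f x : ℝ≥0∞))
    (n : ℕ) (hn : 1 ≤ n) (y : ℕ → S) :
    ((∀ i, i + 1 < n → y i ≤ y (i + 1)) →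
      P {ω | ∀ i < n, ladderVar X i ω = y i}
        = (∏ i ∈ Finset.range (n - 1), ((f (y i) : ℝ≥0∞) / upf f (y i)))
            * (f (y (n - 1)) : ℝ≥0∞)) ∧
    ((¬ ∀ i, i + 1 < n → y i ≤ y (i + 1)) →
      P {ω | ∀ i < n, ladderVar X i ω = y i} = 0) := by
  obtain ⟨K, rfl⟩ : ∃ K, n = K + 1 := ⟨n - 1, by omega⟩
  rw [Nat.add_sub_cancel]
  refine ⟨fun hy => ?_, fun hy => ?_⟩
  · rw [measure_ladder_eq_tsum_measure_gapEvent hmeas hindep hdist hsupp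
        fun k hk => hy k (by omega), tsum_measure_gapEvent hmeas hindep hdist hpdf,
      Fin.prod_univ_eq_prod_range (fun k => (upf f (y k))⁻¹ * f (y (k + 1))) K]
    simp_rw [div_eq_mul_inv]
    exact Finset.mul_prod_range_shift (fun i => (f (y i) : ℝ≥0∞)) (fun i => (upf f (y i))⁻¹) K
  · push Not at hy
    obtain ⟨i, hi, hyi⟩ := hy
    exact measure_ladder_eq_zero_of_not_le hmeas hindep hdist hsupp hi hyi

/-- For an IID sequence with common PDF `f` (support `S`) on a
standard discrete poset, the ladder variables satisfy
`P(Y₁ = y₁, …, Y_n = y_n) = r(y₁) ⋯ r(y_{n−1}) f(y_n)` for every increasing chain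
`y₁ ⪯ ⋯ ⪯ y_n`, where `r = f / F` is the rate function; the probability vanishes for
non-chains. -/
theorem ladderVar_joint_pdf
    {S : Type*} [Countable S] [PartialOrder S] [MeasurableSpace S]
    [MeasurableSingletonClass S]
    (hfin : ∀ x : S, {t : S | t ≤ x}.Finite)
    {Ω : Type*} [MeasurableSpace Ω] (P : Measure Ω) [IsProbabilityMeasure P]
    (f : S → ℝ≥0)
    (hsupp : ∀ x : S, 0 < f x)
    (hpdf : ∑' x : S, (f x : ℝ≥0∞) = 1)
    (X : ℕ → Ω → S)
    (hmeas : ∀ i, Measurable (X i))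
    (hindep : iIndepFun X P)
    (hdist : ∀ i (x : S), P (X i ⁻¹' {x}) = (f x : ℝ≥0∞))
    (n : ℕ) (hn : 1 ≤ n) (y : ℕ → S) :
    ((∀ i, i + 1 < n → y i ≤ y (i + 1)) →
      P {ω | ∀ i < n, ladderVar X i ω = y i}
        = (∏ i ∈ Finset.range (n - 1), ((f (y i) : ℝ≥0∞) / upf f (y i)))
            * (f (y (n - 1)) : ℝ≥0∞)) ∧
    ((¬ ∀ i, i + 1 < n → y i ≤ y (i + 1)) →
      P {ω | ∀ i < n, ladderVar X i ω = y i} = 0) :=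
  ladderVar_joint_pdf_general P f hsupp hpdf X hmeas hindep hdist n hn y
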